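/- Let B be a (nontrivial) Boolean algebra and x a subalgebra of B. Then x is a dual subalgebra of B if and only if for every atom y of the lattice Sub(B) that is incomparable to x (i.e., y ⊄ x and x ⊄ y), the join x ∨ y covers x in Sub(B). -/
import Mathlib


variable {β : Type*} [BooleanAlgebra β]

/-- A subalgebra of a Boolean algebra: contains `⊥,⊤`, closed under `⊓`, `⊔`, `ᶜ`. -/
def IsBASub (s : Set β) : Prop :=
  ⊥ ∈ s ∧ ⊤ ∈ s ∧ (∀ a ∈ s, ∀ b ∈ s, a ⊓ b ∈ s) ∧
    (∀ a ∈ s, ∀ b ∈ s, a ⊔ b ∈ s) ∧ ∀ a ∈ s, aᶜ ∈ s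

/-- A dual subalgebra: the union of an ideal and its complementary filter. -/
def IsDualSub (s : Set β) : Prop :=
  ∃ I : Set β, I.Nonempty ∧ (∀ a ∈ I, ∀ b, b ≤ a → b ∈ I) ∧
    (∀ a ∈ I, ∀ b ∈ I, a ⊔ b ∈ I) ∧ s = I ∪ (fun a => aᶜ) '' I

/-- The subalgebra of a Boolean algebra generated by a set. -/
def baGen (s : Set β) : Set β := ⋂₀ {t : Set β | IsBASub t ∧ s ⊆ t}

/-- An atom of the lattice `Sub(B)` of subalgebras of a Boolean algebra: a subalgebra
that is minimal among subalgebras distinct from the least subalgebra `{⊥, ⊤}`. -/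
def IsBAAtomSub (y : Set β) : Prop :=
  IsBASub y ∧ y ≠ {⊥, ⊤} ∧ ∀ z : Set β, IsBASub z → z ≠ {⊥, ⊤} → z ⊆ y → z = y



open scoped symmDiff

namespace BAhelp

lemma split_eq {a z z' : β} (h1 : z ⊓ a = z' ⊓ a) (h2 : z ⊓ aᶜ = z' ⊓ aᶜ) : z = z' := by
  rw [← sup_inf_inf_compl (x := z) (y := a), h1, h2, sup_inf_inf_compl]

lemma mix_inf_a (a u v : β) : (u ⊓ a ⊔ v ⊓ aᶜ) ⊓ a = u ⊓ a := by
  rw [inf_sup_right, inf_assoc, inf_assoc, compl_inf_self, inf_bot_eq, sup_bot_eq,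
    inf_idem]

lemma mix_inf_ac (a u v : β) : (u ⊓ a ⊔ v ⊓ aᶜ) ⊓ aᶜ = v ⊓ aᶜ := by
  rw [inf_sup_right, inf_assoc, inf_assoc, inf_idem, inf_compl_self, inf_bot_eq,
    bot_sup_eq]

lemma mix_compl (a u v : β) : (u ⊓ a ⊔ v ⊓ aᶜ)ᶜ = uᶜ ⊓ a ⊔ vᶜ ⊓ aᶜ := by
  apply split_eq (a := a)
  · calc (u ⊓ a ⊔ v ⊓ aᶜ)ᶜ ⊓ a = (uᶜ ⊔ aᶜ) ⊓ ((vᶜ ⊔ a) ⊓ a) := by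
          rw [compl_sup, compl_inf, compl_inf, compl_compl, inf_assoc]
      _ = (uᶜ ⊔ aᶜ) ⊓ a := by
          have h : (vᶜ ⊔ a) ⊓ a = a := inf_eq_right.mpr le_sup_right
          rw [h]
      _ = uᶜ ⊓ a ⊔ aᶜ ⊓ a := inf_sup_right _ _ _
      _ = uᶜ ⊓ a := by rw [compl_inf_self, sup_bot_eq]
      _ = (uᶜ ⊓ a ⊔ vᶜ ⊓ aᶜ) ⊓ a := (mix_inf_a a uᶜ vᶜ).symm
  · calc (u ⊓ a ⊔ v ⊓ aᶜ)ᶜ ⊓ aᶜ = (uᶜ ⊔ aᶜ) ⊓ aᶜ ⊓ (vᶜ ⊔ a) := by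
          rw [compl_sup, compl_inf, compl_inf, compl_compl, inf_right_comm]
      _ = aᶜ ⊓ (vᶜ ⊔ a) := by
          have h : (uᶜ ⊔ aᶜ) ⊓ aᶜ = aᶜ := inf_eq_right.mpr le_sup_right
          rw [h]
      _ = aᶜ ⊓ vᶜ ⊔ aᶜ ⊓ a := inf_sup_left _ _ _
      _ = vᶜ ⊓ aᶜ := by rw [compl_inf_self, sup_bot_eq, inf_comm]
      _ = (uᶜ ⊓ a ⊔ vᶜ ⊓ aᶜ) ⊓ aᶜ := (mix_inf_ac a uᶜ vᶜ).symm

lemma mix_inf (a u v u' v' : β) :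
    (u ⊓ a ⊔ v ⊓ aᶜ) ⊓ (u' ⊓ a ⊔ v' ⊓ aᶜ) = (u ⊓ u') ⊓ a ⊔ (v ⊓ v') ⊓ aᶜ := by
  apply split_eq (a := a)
  · rw [inf_inf_distrib_right, mix_inf_a, mix_inf_a, mix_inf_a, inf_inf_inf_comm,
      inf_idem]
  · rw [inf_inf_distrib_right, mix_inf_ac, mix_inf_ac, mix_inf_ac, inf_inf_inf_comm,
      inf_idem]

lemma mix_sup (a u v u' v' : β) :
    (u ⊓ a ⊔ v ⊓ aᶜ) ⊔ (u' ⊓ a ⊔ v' ⊓ aᶜ) = (u ⊔ u') ⊓ a ⊔ (v ⊔ v') ⊓ aᶜ := by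
  rw [inf_sup_right, inf_sup_right]
  ac_rfl

/-- The "mix" set: the subalgebra generated by a subalgebra `x` and one element `a`. -/
def S (x : Set β) (a : β) : Set β := {z | ∃ u ∈ x, ∃ v ∈ x, z = u ⊓ a ⊔ v ⊓ aᶜ}

lemma subset_S {x : Set β} (a : β) : x ⊆ S x a := by
  intro c hc
  exact ⟨c, hc, c, hc, (sup_inf_inf_compl).symm⟩

lemma mem_S {x : Set β} (hx : IsBASub x) (a : β) : a ∈ S x a := by
  refine ⟨⊤, hx.2.1, ⊥, hx.1, ?_⟩
  rw [top_inf_eq, bot_inf_eq, sup_bot_eq]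

lemma compl_mem_S {x : Set β} (hx : IsBASub x) (a : β) : aᶜ ∈ S x a := by
  refine ⟨⊥, hx.1, ⊤, hx.2.1, ?_⟩
  rw [top_inf_eq, bot_inf_eq, bot_sup_eq]

lemma isBASub_S {x : Set β} (hx : IsBASub x) (a : β) : IsBASub (S x a) := by
  obtain ⟨h0, h1, hi, hs, hc⟩ := hx
  refine ⟨subset_S a h0, subset_S a h1, ?_, ?_, ?_⟩
  · rintro _ ⟨u, hu, v, hv, rfl⟩ _ ⟨u', hu', v', hv', rfl⟩
    exact ⟨u ⊓ u', hi u hu u' hu', v ⊓ v', hi v hv v' hv', mix_inf a u v u' v'⟩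
  · rintro _ ⟨u, hu, v, hv, rfl⟩ _ ⟨u', hu', v', hv', rfl⟩
    exact ⟨u ⊔ u', hs u hu u' hu', v ⊔ v', hs v hv v' hv', mix_sup a u v u' v'⟩
  · rintro _ ⟨u, hu, v, hv, rfl⟩
    exact ⟨uᶜ, hc u hu, vᶜ, hc v hv, mix_compl a u v⟩

lemma S_subset {x w : Set β} {a : β} (hw : IsBASub w) (hxw : x ⊆ w) (haw : a ∈ w) :
    S x a ⊆ w := by
  rintro _ ⟨u, hu, v, hv, rfl⟩
  exact hw.2.2.2.1 _ (hw.2.2.1 u (hxw hu) a haw) _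
    (hw.2.2.1 v (hxw hv) aᶜ (hw.2.2.2.2 a haw))

end BAhelp

namespace BAhelp

lemma isBASub_baGen (s : Set β) : IsBASub (baGen s) := by
  refine ⟨?_, ?_, ?_, ?_, ?_⟩
  · exact fun t ht => ht.1.1
  · exact fun t ht => ht.1.2.1
  · intro a ha b hb t ht
    exact ht.1.2.2.1 a (ha t ht) b (hb t ht)
  · intro a ha b hb t ht
    exact ht.1.2.2.2.1 a (ha t ht) b (hb t ht)
  · intro a ha t ht
    exact ht.1.2.2.2.2 a (ha t ht)

lemma subset_baGen (s : Set β) : s ⊆ baGen s := by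
  intro c hc t ht
  exact ht.2 hc

lemma baGen_subset {s t : Set β} (ht : IsBASub t) (hst : s ⊆ t) : baGen s ⊆ t :=
  Set.sInter_subset_of_mem ⟨ht, hst⟩

lemma isBASub_quad (a : β) : IsBASub ({⊥, a, aᶜ, ⊤} : Set β) := by
  refine ⟨by simp, by simp, ?_, ?_, ?_⟩
  · intro p hp q hq
    simp only [Set.mem_insert_iff, Set.mem_singleton_iff] at hp hq ⊢
    rcases hp with rfl | rfl | rfl | rfl <;> rcases hq with rfl | rfl | rfl | rfl <;>
      simp [inf_compl_self, compl_inf_self, inf_comm]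
  · intro p hp q hq
    simp only [Set.mem_insert_iff, Set.mem_singleton_iff] at hp hq ⊢
    rcases hp with rfl | rfl | rfl | rfl <;> rcases hq with rfl | rfl | rfl | rfl <;>
      simp [sup_compl_eq_top, compl_sup_eq_top, sup_comm]
  · intro p hp
    simp only [Set.mem_insert_iff, Set.mem_singleton_iff] at hp ⊢
    rcases hp with rfl | rfl | rfl | rfl <;> simp

lemma atom_form {y : Set β} (hy : IsBAAtomSub y) :
    ∃ a : β, a ≠ ⊥ ∧ a ≠ ⊤ ∧ y = {⊥, a, aᶜ, ⊤} := by
  obtain ⟨hys, hne, hmin⟩ := hy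
  have hex : ∃ a ∈ y, a ≠ ⊥ ∧ a ≠ ⊤ := by
    by_contra hno
    push_neg at hno
    apply hne
    apply Set.Subset.antisymm
    · intro c hc
      rcases eq_or_ne c ⊥ with rfl | hcb
      · simp
      · simp [hno c hc hcb]
    · intro c hc
      rcases hc with rfl | hc
      · exact hys.1
      · rw [Set.mem_singleton_iff] at hc; exact hc ▸ hys.2.1
  obtain ⟨a, hay, ha0, ha1⟩ := hex
  have hsub : ({⊥, a, aᶜ, ⊤} : Set β) ⊆ y := by
    intro c hc
    simp only [Set.mem_insert_iff, Set.mem_singleton_iff] at hc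
    rcases hc with rfl | rfl | rfl | rfl
    exacts [hys.1, hay, hys.2.2.2.2 a hay, hys.2.1]
  have hne' : ({⊥, a, aᶜ, ⊤} : Set β) ≠ {⊥, ⊤} := by
    intro h
    have : a ∈ ({⊥, ⊤} : Set β) := h ▸ (by simp : a ∈ ({⊥, a, aᶜ, ⊤} : Set β))
    rcases this with h' | h'
    · exact ha0 h'
    · rw [Set.mem_singleton_iff] at h'; exact ha1 h'
  exact ⟨a, ha0, ha1, (hmin _ (isBASub_quad a) hne' hsub).symm⟩

lemma mem_symmDiff_of_sub {w : Set β} (hw : IsBASub w) {c d : β}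
    (hc : c ∈ w) (hd : d ∈ w) : c ∆ d ∈ w := by
  rw [symmDiff_eq]
  exact hw.2.2.2.1 _ (hw.2.2.1 c hc dᶜ (hw.2.2.2.2 d hd)) _
    (hw.2.2.1 d hd cᶜ (hw.2.2.2.2 c hc))

end BAhelp

open BAhelp

/-- A subalgebra `x` of a Boolean algebra is a dual subalgebra iff for every atom `y` of
`Sub(B)` incomparable to `x`, the join `x ∨ y` (the subalgebra generated by `x ∪ y`)
covers `x` in `Sub(B)`. -/
theorem stmt_9 (hnt : (⊥ : β) ≠ ⊤) (x : Set β) (hx : IsBASub x) :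
    IsDualSub x ↔
      ∀ y : Set β, IsBAAtomSub y → ¬ y ⊆ x → ¬ x ⊆ y →
        (x ⊂ baGen (x ∪ y) ∧
          ∀ w : Set β, IsBASub w → x ⊂ w → w ⊆ baGen (x ∪ y) → w = baGen (x ∪ y)) := by
  constructor
  · rintro ⟨I, hIne, hIdown, hIjoin, hxI⟩ y hy hyx hxy
    obtain ⟨a, ha0, ha1, rfl⟩ := atom_form hy
    have hax : a ∉ x := by
      intro hax
      apply hyx
      intro c hc
      simp only [Set.mem_insert_iff, Set.mem_singleton_iff] at hc
      rcases hc with rfl | rfl | rfl | rfl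
      exacts [hx.1, hax, hx.2.2.2.2 _ hax, hx.2.1]
    have hxsub : x ⊆ baGen (x ∪ ({⊥, a, aᶜ, ⊤} : Set β)) :=
      Set.Subset.trans Set.subset_union_left (subset_baGen _)
    have hagen : a ∈ baGen (x ∪ ({⊥, a, aᶜ, ⊤} : Set β)) :=
      subset_baGen _ (Or.inr (by simp))
    refine ⟨(Set.ssubset_iff_of_subset hxsub).mpr ⟨a, hagen, hax⟩, ?_⟩
    intro w hw hxw hwgen
    have hxw' : x ⊆ w := hxw.subset
    have hquadS : ({⊥, a, aᶜ, ⊤} : Set β) ⊆ S x a := by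
      intro c hc
      simp only [Set.mem_insert_iff, Set.mem_singleton_iff] at hc
      rcases hc with rfl | rfl | rfl | rfl
      exacts [subset_S _ hx.1, mem_S hx _, compl_mem_S hx _, subset_S _ hx.2.1]
    have hgenS : baGen (x ∪ ({⊥, a, aᶜ, ⊤} : Set β)) ⊆ S x a :=
      baGen_subset (isBASub_S hx a) (Set.union_subset (subset_S a) hquadS)
    obtain ⟨b, hbw, hbx⟩ := Set.exists_of_ssubset hxw
    obtain ⟨u, hu, v, hv, hbuv⟩ := hgenS (hwgen hbw)
    have haw : a ∈ w := by
      have hu' : u ∈ I ∪ (fun a => aᶜ) '' I := hxI ▸ hu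
      have hv' : v ∈ I ∪ (fun a => aᶜ) '' I := hxI ▸ hv
      rcases hu' with hu' | ⟨p, hp, hpu⟩ <;> rcases hv' with hv' | ⟨q, hq, hqv⟩
      · exfalso
        apply hbx
        have hble : b ≤ u ⊔ v := by
          rw [hbuv]
          exact sup_le (inf_le_left.trans le_sup_left) (inf_le_left.trans le_sup_right)
        have : b ∈ I := hIdown _ (hIjoin u hu' v hv') b hble
        rw [hxI]; exact Or.inl this
      · simp only at hqv
        have hbc : bᶜ = uᶜ ⊓ a ⊔ q ⊓ aᶜ := by
          rw [hbuv, mix_compl, ← hqv, compl_compl]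
        have hd : aᶜ ∆ b = q ⊓ aᶜ ⊔ u ⊓ a := by
          rw [symmDiff_eq, compl_compl, hbc, hbuv]
          rw [inf_comm aᶜ _, mix_inf_ac, mix_inf_a]
        have hdle : aᶜ ∆ b ≤ q ⊔ u := by
          rw [hd]
          exact sup_le (inf_le_left.trans le_sup_left) (inf_le_left.trans le_sup_right)
        have hdx : aᶜ ∆ b ∈ x := by
          rw [hxI]; exact Or.inl (hIdown _ (hIjoin q hq u hu') _ hdle)
        have haw' : aᶜ ∈ w := by
          have := mem_symmDiff_of_sub hw (hxw' hdx) hbw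
          rwa [symmDiff_symmDiff_cancel_right] at this
        have := hw.2.2.2.2 _ haw'
        rwa [compl_compl] at this
      · simp only at hpu
        have hbc : bᶜ = p ⊓ a ⊔ vᶜ ⊓ aᶜ := by
          rw [hbuv, mix_compl, ← hpu, compl_compl]
        have hd : a ∆ b = p ⊓ a ⊔ v ⊓ aᶜ := by
          rw [symmDiff_eq, hbc, hbuv]
          rw [inf_comm a _, mix_inf_a, mix_inf_ac]
        have hdle : a ∆ b ≤ p ⊔ v := by
          rw [hd]
          exact sup_le (inf_le_left.trans le_sup_left) (inf_le_left.trans le_sup_right)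
        have hdx : a ∆ b ∈ x := by
          rw [hxI]; exact Or.inl (hIdown _ (hIjoin p hp v hv') _ hdle)
        have := mem_symmDiff_of_sub hw (hxw' hdx) hbw
        rwa [symmDiff_symmDiff_cancel_right] at this
      · exfalso
        apply hbx
        simp only at hpu hqv
        have hbc : bᶜ = p ⊓ a ⊔ q ⊓ aᶜ := by
          rw [hbuv, mix_compl, ← hpu, ← hqv, compl_compl, compl_compl]
        have hble : bᶜ ≤ p ⊔ q := by
          rw [hbc]
          exact sup_le (inf_le_left.trans le_sup_left) (inf_le_left.trans le_sup_right)
        have : bᶜ ∈ I := hIdown _ (hIjoin p hp q hq) _ hble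
        rw [hxI]
        exact Or.inr ⟨bᶜ, this, compl_compl b⟩
    have hyw : ({⊥, a, aᶜ, ⊤} : Set β) ⊆ w := by
      intro c hc
      simp only [Set.mem_insert_iff, Set.mem_singleton_iff] at hc
      rcases hc with rfl | rfl | rfl | rfl
      exacts [hw.1, haw, hw.2.2.2.2 _ haw, hw.2.1]
    exact Set.Subset.antisymm hwgen (baGen_subset hw (Set.union_subset hxw' hyw))
  · intro h
    by_contra hnd
    have hkey : ∃ c ∈ x, (∃ b, b ≤ c ∧ b ∉ x) ∧ (∃ e, e ≤ cᶜ ∧ e ∉ x) := by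
      by_contra hno
      push_neg at hno
      apply hnd
      refine ⟨{c : β | ∀ b, b ≤ c → b ∈ x}, ⟨⊥, ?_⟩, ?_, ?_, ?_⟩
      · intro b hb
        rw [le_bot_iff] at hb
        rw [hb]
        exact hx.1
      · intro c hc b hb g hg
        exact hc g (hg.trans hb)
      · intro c hc d hd g hg
        have hg' : g = g ⊓ c ⊔ g ⊓ d := by
          rw [← inf_sup_left, inf_eq_left.mpr hg]
        rw [hg']
        exact hx.2.2.2.1 _ (hc _ inf_le_right) _ (hd _ inf_le_right)
      · apply Set.Subset.antisymm
        · intro c hc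
          by_cases hA : ∀ b, b ≤ c → b ∈ x
          · exact Or.inl hA
          · push_neg at hA
            obtain ⟨b, hbc, hbx⟩ := hA
            exact Or.inr ⟨cᶜ, fun e he => hno c hc ⟨b, hbc, hbx⟩ e he, compl_compl c⟩
        · rintro c (hc | ⟨p, hp, rfl⟩)
          · exact hc c le_rfl
          · exact hx.2.2.2.2 p (hp p le_rfl)
    obtain ⟨c, hcx, ⟨b, hbc, hbx⟩, ⟨e, hec, hex⟩⟩ := hkey
    set a := b ⊔ e with ha
    have hbcbot : b ⊓ cᶜ = ⊥ := by
      rw [← le_bot_iff]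
      calc b ⊓ cᶜ ≤ c ⊓ cᶜ := inf_le_inf_right _ hbc
        _ = ⊥ := inf_compl_self c
    have hecbot : e ⊓ c = ⊥ := by
      rw [← le_bot_iff]
      calc e ⊓ c ≤ cᶜ ⊓ c := inf_le_inf_right _ hec
        _ = ⊥ := compl_inf_self c
    have hac : a ⊓ c = b := by
      rw [ha, inf_sup_right, inf_eq_left.mpr hbc, hecbot, sup_bot_eq]
    have hacc : a ⊓ cᶜ = e := by
      rw [ha, inf_sup_right, hbcbot, inf_eq_left.mpr hec, bot_sup_eq]
    have hax : a ∉ x := fun hax => hbx (hac ▸ hx.2.2.1 a hax c hcx)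
    have ha0 : a ≠ ⊥ := by
      intro hh
      apply hbx
      have hba : b ≤ a := le_sup_left
      rw [hh, le_bot_iff] at hba
      rw [hba]
      exact hx.1
    have ha1 : a ≠ ⊤ := by
      intro hh
      apply hbx
      have : b = c := by rw [← hac, hh, top_inf_eq]
      rw [this]
      exact hcx
    have hquad : IsBAAtomSub ({⊥, a, aᶜ, ⊤} : Set β) := by
      refine ⟨isBASub_quad a, ?_, ?_⟩
      · intro hEq
        have : a ∈ ({⊥, ⊤} : Set β) := hEq ▸ (by simp : a ∈ ({⊥, a, aᶜ, ⊤} : Set β))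
        rcases this with h' | h'
        · exact ha0 h'
        · rw [Set.mem_singleton_iff] at h'; exact ha1 h'
      · intro z hz hzne hzy
        have hbotz : (⊥ : β) ∈ z := hz.1
        have htopz : (⊤ : β) ∈ z := hz.2.1
        have hgz : ∃ g ∈ z, g ≠ ⊥ ∧ g ≠ ⊤ := by
          by_contra hng
          push_neg at hng
          apply hzne
          apply Set.Subset.antisymm
          · intro g hg
            rcases eq_or_ne g ⊥ with rfl | hgb
            · simp
            · simp [hng g hg hgb]
          · intro g hg
            rcases hg with rfl | hg
            · exact hbotz
            · rw [Set.mem_singleton_iff] at hg; rw [hg]; exact htopz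
        obtain ⟨g, hgz', hg0, hg1⟩ := hgz
        have hgy := hzy hgz'
        simp only [Set.mem_insert_iff, Set.mem_singleton_iff] at hgy
        have haz : a ∈ z := by
          rcases hgy with rfl | rfl | rfl | rfl
          · exact absurd rfl hg0
          · exact hgz'
          · have := hz.2.2.2.2 _ hgz'
            rwa [compl_compl] at this
          · exact absurd rfl hg1
        apply Set.Subset.antisymm hzy
        intro p hp
        simp only [Set.mem_insert_iff, Set.mem_singleton_iff] at hp
        rcases hp with rfl | rfl | rfl | rfl
        exacts [hbotz, haz, hz.2.2.2.2 _ haz, htopz]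
    have hyx : ¬ ({⊥, a, aᶜ, ⊤} : Set β) ⊆ x := fun hsub => hax (hsub (by simp))
    have hxy : ¬ x ⊆ ({⊥, a, aᶜ, ⊤} : Set β) := by
      intro hsub
      have hcy := hsub hcx
      simp only [Set.mem_insert_iff, Set.mem_singleton_iff] at hcy
      rcases hcy with rfl | rfl | rfl | rfl
      · apply hbx
        rw [le_bot_iff.mp hbc]
        exact hx.1
      · exact hax hcx
      · apply hax
        have := hx.2.2.2.2 _ hcx
        rwa [compl_compl] at this
      · apply hex
        have he0 : e = ⊥ := le_bot_iff.mp (by simpa using hec)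
        rw [he0]
        exact hx.1
    obtain ⟨hlt, hcov⟩ := h _ hquad hyx hxy
    have hWsub := isBASub_S hx b
    have hxW : x ⊂ S x b := (Set.ssubset_iff_of_subset (subset_S b)).mpr ⟨b, mem_S hx b, hbx⟩
    have hagen : a ∈ baGen (x ∪ ({⊥, a, aᶜ, ⊤} : Set β)) :=
      subset_baGen _ (Or.inr (by simp))
    have hbgen : b ∈ baGen (x ∪ ({⊥, a, aᶜ, ⊤} : Set β)) := by
      have hcgen : c ∈ baGen (x ∪ ({⊥, a, aᶜ, ⊤} : Set β)) := subset_baGen _ (Or.inl hcx)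
      have := (isBASub_baGen (x ∪ ({⊥, a, aᶜ, ⊤} : Set β))).2.2.1 a hagen c hcgen
      rwa [hac] at this
    have hWgen : S x b ⊆ baGen (x ∪ ({⊥, a, aᶜ, ⊤} : Set β)) :=
      S_subset (isBASub_baGen _) (Set.Subset.trans Set.subset_union_left (subset_baGen _)) hbgen
    have heq := hcov _ hWsub hxW hWgen
    have haS : a ∈ S x b := by rw [heq]; exact hagen
    obtain ⟨s, hs, t, ht, haeq⟩ := haS
    have hbcc : bᶜ ⊓ cᶜ = cᶜ := inf_eq_right.mpr (compl_le_compl hbc)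
    have h2 : a ⊓ cᶜ = t ⊓ cᶜ := by
      rw [haeq, inf_sup_right, inf_assoc, hbcbot, inf_bot_eq, bot_sup_eq, inf_assoc, hbcc]
    apply hex
    rw [← hacc, h2]
    exact hx.2.2.1 t ht cᶜ (hx.2.2.2.2 c hcx)
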